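/- arXiv:1308.4527 — 4 statements merged into one kernel-verified Lean document; each statement's English description precedes it below -/
import Mathlib

section
/- Let f : ℝ → ℝ be a nonnegative integrable function (a probability density) such that ∫ x²·f(x) dx < ∞. Then for every α > 0, the series ∑_{k∈ℤ} √(∫_{[kα,(k+1)α]} f(x) dx) converges. -/
/-!
Weight the `k`-th interval `I_k` by `1 + k²`. On `I_k` one has `1 + k² ≤ C (1 + x²)`, so
`(1 + k²) ω_k` is at most the mass of the integrable function `C (1 + x²) f` on `I_k`, and these
masses are summable because the `I_k` overlap only at endpoints. By AM–GM,
`√ω_k ≤ (1 + k²) ω_k + (1 + k²)⁻¹`, and both series on the right converge.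
-/

open MeasureTheory Set

theorem summable_sqrt_of_summable_mul {ι : Type*} {a w : ι → ℝ} (ha : ∀ i, 0 ≤ a i)
    (hw : ∀ i, 0 < w i) (hwa : Summable fun i => w i * a i)
    (hw_inv : Summable fun i => (w i)⁻¹) :
    Summable fun i => √(a i) := by
  refine .of_nonneg_of_le (fun i => Real.sqrt_nonneg _) (fun i => ?_) (hwa.add hw_inv)
  have hwa_nonneg : 0 ≤ w i * a i := mul_nonneg (hw i).le (ha i)
  have hw_inv_nonneg : 0 ≤ (w i)⁻¹ := inv_nonneg.mpr (hw i).le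
  refine Real.sqrt_le_iff.mpr ⟨by positivity, ?_⟩
  calc a i = (w i * a i) * (w i)⁻¹ := by field_simp [(hw i).ne']
    _ ≤ (w i * a i + (w i)⁻¹) ^ 2 := by nlinarith [mul_nonneg hwa_nonneg hw_inv_nonneg]

theorem summable_inv_one_add_sq_int : Summable fun k : ℤ => (1 + (k : ℝ) ^ 2)⁻¹ := by
  refine (Real.summable_one_div_int_pow.mpr one_lt_two).of_norm_bounded_eventually ?_
  filter_upwards [Filter.eventually_cofinite_ne 0] with k hk
  rw [Real.norm_of_nonneg (by positivity), one_div]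
  have : (k : ℝ) ≠ 0 := Int.cast_ne_zero.mpr hk
  exact inv_anti₀ (by positivity) (by linarith)

theorem summable_setIntegral_Icc_intCast_mul {E : Type*} [NormedAddCommGroup E]
    [NormedSpace ℝ E] {μ : Measure ℝ} [NullSingletonClass μ] {g : ℝ → E} (hg : Integrable g μ)
    (α : ℝ) :
    Summable fun k : ℤ => ∫ x in Icc ((k : ℝ) * α) (((k : ℝ) + 1) * α), g x ∂μ := by
  have hd := pairwise_disjoint_Ioc_add_zsmul (0 : ℝ) α
  simp only [zero_add, zsmul_eq_mul, Int.cast_add, Int.cast_one] at hd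
  simp_rw [integral_Icc_eq_integral_Ioc]
  exact (hasSum_integral_iUnion (fun _ => measurableSet_Ioc) hd hg.integrableOn).summable

theorem one_add_sq_le_of_mem_Icc {α k x : ℝ} (hα : 0 < α) (hx : x ∈ Icc (k * α) ((k + 1) * α)) :
    1 + k ^ 2 ≤ (3 + 2 / α ^ 2) * (1 + x ^ 2) := by
  obtain ⟨hlo, hhi⟩ := hx
  have hkα : (k * α) ^ 2 ≤ 2 * x ^ 2 + 2 * α ^ 2 := by
    nlinarith [sq_nonneg (2 * x - k * α)]
  have hk : k ^ 2 ≤ 2 + 2 / α ^ 2 * x ^ 2 := by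
    rw [← sub_le_iff_le_add', div_mul_eq_mul_div, le_div_iff₀ (by positivity)]
    nlinarith
  nlinarith [sq_nonneg x, show 0 ≤ 2 / α ^ 2 by positivity]

theorem stmt_1_general (f : ℝ → ℝ) (hnn : ∀ x, 0 ≤ f x)
    (hint : MeasureTheory.Integrable f)
    (hmom : MeasureTheory.Integrable fun x => x ^ 2 * f x) (α : ℝ) (hα : 0 < α) :
    Summable fun k : ℤ =>
      Real.sqrt (∫ x in Set.Icc ((k : ℝ) * α) (((k : ℝ) + 1) * α), f x) := by
  set C := 3 + 2 / α ^ 2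
  have hg : Integrable fun x => C * ((1 + x ^ 2) * f x) := by
    simpa only [Pi.add_apply, add_mul, one_mul] using (hint.add hmom).const_mul C
  have hω : ∀ k : ℤ, 0 ≤ ∫ x in Icc ((k : ℝ) * α) (((k : ℝ) + 1) * α), f x :=
    fun k => setIntegral_nonneg measurableSet_Icc fun x _ => hnn x
  refine summable_sqrt_of_summable_mul hω (fun k => by positivity) ?_ summable_inv_one_add_sq_int
  refine .of_nonneg_of_le (fun k => mul_nonneg (by positivity) (hω k)) (fun k => ?_)
    (summable_setIntegral_Icc_intCast_mul hg α)
  rw [← integral_const_mul]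
  refine setIntegral_mono_on (hint.const_mul _).integrableOn hg.integrableOn measurableSet_Icc
    fun x hx => ?_
  rw [← mul_assoc]
  exact mul_le_mul_of_nonneg_right (one_add_sq_le_of_mem_Icc hα hx) (hnn x)

/-- A probability density with finite second moment has summable interval square-root masses
for every spacing `α > 0`. -/
theorem stmt_1 (f : ℝ → ℝ) (hmeas : Measurable f) (hnn : ∀ x, 0 ≤ f x)
    (hint : MeasureTheory.Integrable f) (hprob : (∫ x, f x) = 1)
    (hmom : MeasureTheory.Integrable fun x => x ^ 2 * f x) (α : ℝ) (hα : 0 < α) :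
    Summable fun k : ℤ =>
      Real.sqrt (∫ x in Set.Icc ((k : ℝ) * α) (((k : ℝ) + 1) * α), f x) :=
  stmt_1_general f hnn hint hmom α hα
end

section
/- There exists a nonnegative integrable function f : ℝ → ℝ with ∫ f = 1 and ∫ √f < ∞ such that for every α > 0 and every partition of ℝ into consecutive intervals of length α, the series ∑_k √(∫_{I_k} f) diverges. -/
/-!
The density is the indicator of the disjoint blocks `[n + 1 - ℓₙ, n + 1)` with
`ℓₙ = 1 / ((n + 1) (n + 2))`: then `∑ ℓₙ = 1` and `√f = f` is integrable, while `∑ √ℓₙ` diverges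
like the harmonic series. In a grid of spacing `α`, a block shorter than `α` has at least half of
its mass in the cell containing its midpoint. Along the blocks `n₀ + N j` with `N ≥ α + 1` these
cells are distinct, so the cell sums `∑ √(∫_{Iₖ} f)` dominate `∑ⱼ 1 / (2 (n₀ + N j + 2))`.
-/

open MeasureTheory Set Function

lemma half_sub_le_volume_real_Ico_inter_Ico {a b L R : ℝ} (hab : a ≤ b) (hlen : b - a ≤ R - L)
    (hL : L ≤ (a + b) / 2) (hR : (a + b) / 2 < R) :
    (b - a) / 2 ≤ volume.real (Ico a b ∩ Ico L R) := by
  rw [Ico_inter_Ico, Real.volume_real_Ico]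
  refine le_max_of_le_left ?_
  rcases min_cases b R with ⟨h, -⟩ | ⟨h, -⟩ <;> rcases max_cases a L with ⟨h', -⟩ | ⟨h', -⟩ <;>
    rw [h, h'] <;> linarith

lemma mem_Ico_floor_div_mul (c x : ℝ) {α : ℝ} (hα : 0 < α) :
    x ∈ Ico (c + ⌊(x - c) / α⌋ * α) (c + (⌊(x - c) / α⌋ + 1) * α) := by
  have h₁ := (le_div_iff₀ hα).mp (Int.floor_le ((x - c) / α))
  have h₂ := (div_lt_iff₀ hα).mp (Int.lt_floor_add_one ((x - c) / α))
  constructor <;> linarith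

lemma strictMono_floor_div {p : ℕ → ℝ} {α : ℝ} (hα : 0 < α) (hp : ∀ j, p j + α ≤ p (j + 1))
    (c : ℝ) : StrictMono fun j => ⌊(p j - c) / α⌋ := by
  refine strictMono_nat_of_lt_succ fun j => ?_
  rw [← Int.add_one_le_iff, ← Int.floor_add_one]
  refine Int.floor_le_floor ?_
  rw [div_add_one hα.ne', div_le_div_iff_of_pos_right hα]
  linarith [hp j]

lemma not_summable_one_div_mul_add {a b : ℝ} (ha : 0 < a) (hb : 0 < b) :
    ¬ Summable fun j : ℕ => 1 / (a * j + b) := by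
  intro h
  have hcmp : ∀ j : ℕ, 1 / (a + b) * (1 / ((j : ℝ) + 1)) ≤ 1 / (a * j + b) := fun j => by
    rw [div_mul_div_comm, one_mul]
    exact one_div_le_one_div_of_le (by positivity) (by nlinarith [(j.cast_nonneg : (0:ℝ) ≤ j)])
  have hharm := (summable_mul_left_iff (by positivity : 1 / (a + b) ≠ 0)).mp
    (h.of_nonneg_of_le (fun j => by positivity) hcmp)
  exact Real.not_summable_one_div_natCast ((summable_nat_add_iff 1).mp (by exact_mod_cast hharm))

namespace ThinBlocks

noncomputable def len (n : ℕ) : ℝ := 1 / ((n + 1) * (n + 2))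

lemma len_pos (n : ℕ) : 0 < len n := by
  unfold len; positivity

lemma len_le_inv_succ (n : ℕ) : len n ≤ 1 / (n + 1) := by
  unfold len
  rw [← div_div]
  exact div_le_self (by positivity) (by linarith [(n.cast_nonneg : (0:ℝ) ≤ n)])

lemma len_le_one (n : ℕ) : len n ≤ 1 :=
  (len_le_inv_succ n).trans (div_le_one_of_le₀ (by linarith [(n.cast_nonneg : (0:ℝ) ≤ n)])
    (by positivity))

lemma len_le_of_inv_le {α : ℝ} (hα : 0 < α) {n : ℕ} (hn : 1 / α ≤ n) : len n ≤ α := by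
  calc len n ≤ 1 / (n + 1) := len_le_inv_succ n
    _ ≤ 1 / (1 / α) := one_div_le_one_div_of_le (by positivity) (by linarith)
    _ = α := one_div_one_div α

lemma hasSum_len : HasSum len 1 := by
  have htel : ∀ N : ℕ, ∑ n ∈ Finset.range N, len n = 1 - 1 / ((N : ℝ) + 1) := fun N => by
    induction N with
    | zero => norm_num
    | succ N ih =>
      rw [Finset.sum_range_succ, ih, len]
      push_cast
      field_simp
      ring
  rw [hasSum_iff_tendsto_nat_of_nonneg (fun n => (len_pos n).le), funext htel]
  simpa using tendsto_one_div_add_atTop_nhds_zero_nat.const_sub (1 : ℝ)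

lemma one_div_two_mul_le_sqrt_half_len (n : ℕ) : 1 / (2 * ((n : ℝ) + 2)) ≤ √(len n / 2) := by
  rw [Real.le_sqrt (by positivity) (by positivity [len_pos n]), len]
  rw [div_pow, one_pow, div_div, div_le_div_iff₀ (by positivity) (by positivity)]
  nlinarith [(n.cast_nonneg : (0:ℝ) ≤ n)]

def block (n : ℕ) : Set ℝ := Ico ((n : ℝ) + 1 - len n) (n + 1)

noncomputable def mid (n : ℕ) : ℝ := (n : ℝ) + 1 - len n / 2

lemma mid_add_le (n k : ℕ) : mid n + (k - 1) ≤ mid (n + k) := by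
  unfold mid
  push_cast
  linarith [len_pos n, len_le_one (n + k)]

lemma pairwise_disjoint_block : Pairwise (Disjoint on block) := by
  have hsub (n : ℕ) : block n ⊆ Ico ((n : ℤ) : ℝ) ((n : ℤ) + 1) := by
    rw [Int.cast_natCast]
    exact Ico_subset_Ico (by linarith [len_le_one n]) le_rfl
  exact ((pairwise_disjoint_Ico_intCast ℝ).comp_of_injective Nat.cast_injective).mono
    fun m n h => h.mono (hsub m) (hsub n)

def carrier : Set ℝ := ⋃ n, block n

lemma volume_carrier : volume carrier = 1 := by
  rw [carrier, measure_iUnion pairwise_disjoint_block fun _ => measurableSet_Ico]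
  simp only [block, Real.volume_Ico, sub_sub_cancel]
  rw [← ENNReal.ofReal_tsum_of_nonneg (fun n => (len_pos n).le) hasSum_len.summable,
    hasSum_len.tsum_eq, ENNReal.ofReal_one]

noncomputable def density : ℝ → ℝ := carrier.indicator 1

lemma measurableSet_carrier : MeasurableSet carrier :=
  MeasurableSet.iUnion fun _ => measurableSet_Ico

lemma measurable_density : Measurable density :=
  measurable_const.indicator measurableSet_carrier

lemma density_nonneg (x : ℝ) : 0 ≤ density x :=
  indicator_nonneg (fun _ _ => zero_le_one) x

lemma integrable_density : Integrable density :=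
  (integrable_indicator_iff measurableSet_carrier).mpr
    (integrableOn_const (by rw [volume_carrier]; exact ENNReal.one_ne_top))

lemma integral_density : ∫ x, density x = 1 := by
  rw [density, integral_indicator_one measurableSet_carrier, measureReal_def, volume_carrier,
    ENNReal.toReal_one]

lemma sqrt_density : (fun x => √(density x)) = density := by
  funext x
  by_cases hx : x ∈ carrier <;> simp [density, hx]

lemma half_len_le_setIntegral_density {n : ℕ} {L R : ℝ} (hlen : len n ≤ R - L)
    (hmid : mid n ∈ Ico L R) : len n / 2 ≤ ∫ x in Ico L R, density x := by
  rw [density, integral_indicator_one measurableSet_carrier,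
    measureReal_restrict_apply measurableSet_carrier]
  calc len n / 2 = ((n + 1 : ℝ) - (n + 1 - len n)) / 2 := by ring
    _ ≤ volume.real (block n ∩ Ico L R) := by
      refine half_sub_le_volume_real_Ico_inter_Ico (by linarith [len_pos n]) (by linarith)
        ?_ ?_ <;> linarith [hmid.1, hmid.2, show mid n = n + 1 - len n / 2 from rfl]
    _ ≤ volume.real (carrier ∩ Ico L R) :=
      measureReal_mono (inter_subset_inter_left _ (subset_iUnion block n))
        (measure_inter_lt_top_of_right_ne_top measure_Ico_lt_top.ne).ne

end ThinBlocks

open ThinBlocks in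
/-- There is a probability density `f` with `∫ √f < ∞` such that for every spacing `α > 0`
and every partition of `ℝ` into consecutive intervals of length `α`, the series
`∑ₖ √(∫_{Iₖ} f)` diverges. -/
theorem stmt_4 :
    ∃ f : ℝ → ℝ, Measurable f ∧ (∀ x, 0 ≤ f x) ∧ MeasureTheory.Integrable f ∧
      (∫ x, f x) = 1 ∧ MeasureTheory.Integrable (fun x => Real.sqrt (f x)) ∧
      ∀ α > (0 : ℝ), ∀ c : ℝ,
        ¬ Summable fun k : ℤ =>
            Real.sqrt (∫ x in Set.Ico (c + (k : ℝ) * α) (c + ((k : ℝ) + 1) * α), f x) := by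
  refine ⟨density, measurable_density, density_nonneg, integrable_density, integral_density,
    by rw [sqrt_density]; exact integrable_density, fun α hα c hsum => ?_⟩
  obtain ⟨N, hN⟩ := exists_nat_ge (α + 1)
  obtain ⟨n₀, hn₀⟩ := exists_nat_ge (1 / α)
  set b : ℕ → ℕ := fun j => n₀ + N * j
  set κ : ℕ → ℤ := fun j => ⌊(mid (b j) - c) / α⌋
  have hκ : StrictMono κ := strictMono_floor_div hα (fun j => by
    have := mid_add_le (b j) N
    simp only [b, mul_add, mul_one, ← add_assoc] at this ⊢
    linarith) c
  have hlow (j : ℕ) : 1 / (2 * N * j + 2 * (n₀ + 2)) ≤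
      √(∫ x in Ico (c + (κ j : ℝ) * α) (c + ((κ j : ℝ) + 1) * α), density x) := by
    have hb : 1 / α ≤ (b j : ℝ) := hn₀.trans (by exact_mod_cast Nat.le_add_right n₀ (N * j))
    calc 1 / (2 * N * j + 2 * (n₀ + 2)) = 1 / (2 * ((b j : ℝ) + 2)) := by
          simp only [b]; push_cast; ring_nf
      _ ≤ √(len (b j) / 2) := one_div_two_mul_le_sqrt_half_len (b j)
      _ ≤ _ := Real.sqrt_le_sqrt (half_len_le_setIntegral_density
          (by linarith [len_le_of_inv_le hα hb]) (mem_Ico_floor_div_mul c (mid (b j)) hα))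
  exact not_summable_one_div_mul_add (by linarith) (by positivity)
    ((hsum.comp_injective hκ.injective).of_nonneg_of_le (fun _ => by positivity) hlow)
end

section
/- Let g_Q and g_P be centered Gaussian densities on ℝ with variances σ_Q² and σ_P² satisfying σ_Q·σ_P = 1/2. Then h_min(g_Q) + h_max(g_P) = log(2π), where h_min(f) = −log ‖f‖_∞ and h_max(f) = 2·log ∫ √f. -/
/-!
For a continuous function the essential supremum is the pointwise supremum, since nonempty open
sets have positive Lebesgue measure; so `‖g_Q‖_∞ = g_Q 0 = (2πσ_Q²)^(-1/2)` and
`h_min(g_Q) = ½ log(2πσ_Q²)`. The square root of a centered Gaussian density of variance `v` is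
`(2πv)^(-1/4)` times the unnormalised Gaussian `exp(-x²/(4v))`, whose integral is `√(4πv)`; so
`h_max(g_P) = log 2 + ½ log(2πσ_P²)`. Since `(2πσ_Q²)(2πσ_P²) = π²` when `σ_Q σ_P = 1/2`, the sum
is `log 2 + log π`.
-/

open MeasureTheory Real

section EssSup

variable {X ε : Type*} [TopologicalSpace X] [MeasurableSpace X] {μ : Measure X}
  [μ.IsOpenPosMeasure] [TopologicalSpace ε] [ContinuousENorm ε] {f : X → ε}

theorem Continuous.enorm_le_eLpNormEssSup (hf : Continuous f) (x : X) :
    ‖f x‖ₑ ≤ eLpNormEssSup f μ := by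
  by_contra! hx
  have hU : IsOpen {y | eLpNormEssSup f μ < ‖f y‖ₑ} := isOpen_lt continuous_const hf.enorm
  have hU_null : μ {y | eLpNormEssSup f μ < ‖f y‖ₑ} = 0 := by
    simpa only [not_le] using ae_iff.mp (ae_le_eLpNormEssSup (μ := μ) (f := f))
  exact (hU.measure_pos μ ⟨x, hx⟩).ne' hU_null

theorem Continuous.eLpNormEssSup_eq_iSup (hf : Continuous f) :
    eLpNormEssSup f μ = ⨆ x, ‖f x‖ₑ :=
  le_antisymm (eLpNormEssSup_le_of_ae_enorm_bound (ae_of_all _ (le_iSup (‖f ·‖ₑ))))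
    (iSup_le hf.enorm_le_eLpNormEssSup)

end EssSup

section Gaussian

variable {v : ℝ}

theorem eLpNorm_top_gaussian (hv : 0 < v) :
    (eLpNorm (fun x : ℝ => (√(2 * π * v))⁻¹ * exp (-x ^ 2 / (2 * v))) ⊤ volume).toReal =
      (√(2 * π * v))⁻¹ := by
  have h_le_at_zero (x : ℝ) : ‖(√(2 * π * v))⁻¹ * exp (-x ^ 2 / (2 * v))‖ₑ ≤ ‖(√(2 * π * v))⁻¹‖ₑ := by
    rw [enorm_mul]
    refine mul_le_of_le_one_right' ?_
    rw [Real.enorm_eq_ofReal (exp_pos _).le, ENNReal.ofReal_le_one, exp_le_one_iff]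
    exact div_nonpos_of_nonpos_of_nonneg (neg_nonpos.mpr (sq_nonneg x)) (by positivity)
  rw [eLpNorm_exponent_top, Continuous.eLpNormEssSup_eq_iSup (by fun_prop),
    le_antisymm (iSup_le h_le_at_zero) (le_iSup_of_le 0 (by simp))]
  simp

theorem integral_sqrt_gaussian (hv : 0 < v) :
    ∫ x : ℝ, √((√(2 * π * v))⁻¹ * exp (-x ^ 2 / (2 * v))) =
      (√(√(2 * π * v)))⁻¹ * √(4 * π * v) := by
  have h_sqrt (x : ℝ) : √((√(2 * π * v))⁻¹ * exp (-x ^ 2 / (2 * v))) =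
      (√(√(2 * π * v)))⁻¹ * exp (-(4 * v)⁻¹ * x ^ 2) := by
    rw [sqrt_mul (by positivity), sqrt_inv, ← exp_half]
    congr 2
    field_simp
    ring
  simp_rw [h_sqrt]
  rw [integral_const_mul, integral_gaussian, div_inv_eq_mul]
  ring_nf

theorem neg_log_eLpNorm_top_gaussian (hv : 0 < v) :
    -log (eLpNorm (fun x : ℝ => (√(2 * π * v))⁻¹ * exp (-x ^ 2 / (2 * v))) ⊤ volume).toReal =
      log (2 * π * v) / 2 := by
  rw [eLpNorm_top_gaussian hv, log_inv, neg_neg, log_sqrt (by positivity)]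

theorem two_mul_log_integral_sqrt_gaussian (hv : 0 < v) :
    2 * log (∫ x : ℝ, √((√(2 * π * v))⁻¹ * exp (-x ^ 2 / (2 * v)))) =
      log 2 + log (2 * π * v) / 2 := by
  have h2πv : 0 < 2 * π * v := by positivity
  rw [integral_sqrt_gaussian hv, log_mul (by positivity) (by positivity), log_inv,
    log_sqrt (sqrt_nonneg _), log_sqrt h2πv.le, log_sqrt (by positivity),
    show 4 * π * v = 2 * (2 * π * v) by ring, log_mul two_ne_zero h2πv.ne']
  ring

end Gaussian

open MeasureTheory in
/-- Minimal-uncertainty Gaussians saturate the min/max entropic uncertainty relation: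
if `σ_Q σ_P = 1/2` then `h_min(g_Q) + h_max(g_P) = log(2π)`. -/
theorem stmt_7 (σQ σP : ℝ) (hσQ : 0 < σQ) (hσP : 0 < σP) (hmin : σQ * σP = 1 / 2)
    (gQ gP : ℝ → ℝ)
    (hgQ : gQ = fun x => (Real.sqrt (2 * Real.pi * σQ ^ 2))⁻¹ *
        Real.exp (-x ^ 2 / (2 * σQ ^ 2)))
    (hgP : gP = fun x => (Real.sqrt (2 * Real.pi * σP ^ 2))⁻¹ *
        Real.exp (-x ^ 2 / (2 * σP ^ 2))) :
    (-Real.log ((eLpNorm gQ ⊤ (volume : Measure ℝ)).toReal)) +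
        2 * Real.log (∫ x, Real.sqrt (gP x)) = Real.log (2 * Real.pi) := by
  subst hgQ hgP
  rw [neg_log_eLpNorm_top_gaussian (pow_pos hσQ 2),
    two_mul_log_integral_sqrt_gaussian (pow_pos hσP 2)]
  have h_product : (2 * π * σQ ^ 2) * (2 * π * σP ^ 2) = π ^ 2 := by
    linear_combination 4 * π ^ 2 * (σQ * σP + 1 / 2) * hmin
  have h_log_sum : log (2 * π * σQ ^ 2) + log (2 * π * σP ^ 2) = 2 * log π := by
    rw [← log_mul (by positivity) (by positivity), h_product, log_pow, Nat.cast_ofNat]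
  rw [log_mul two_ne_zero pi_ne_zero]
  linarith
end

section
/- For all ν > 1, f(ν) = log(e·π·ν) − ((ν+1)/2)·log((ν+1)/2) + ((ν−1)/2)·log((ν−1)/2) satisfies f(ν) > log(2π). -/
/-!
Since `log (e π ν) - log (2 π) = 1 + log (ν / 2)`, with `a = (ν + 1) / 2`, `m = ν / 2` and
`b = (ν - 1) / 2` the claim reads `a log a - b log b - log m < 1`. As `a - b = 1`, `m` times the
left side is `a m log (a / m) + m b log (m / b)`, and `x y log (x / y) < (x² - y²) / 2` for
`x > y > 0` (this is `log t < sinh (log t)` at `t = x / y`); the two bounds add up to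
`(a² - b²) / 2 = m`.
-/

open Real

theorem Real.log_lt_sub_inv_div_two {x : ℝ} (hx : 1 < x) : log x < (x - x⁻¹) / 2 := by
  rw [← sinh_log (by positivity)]
  exact self_lt_sinh_iff.mpr (log_pos hx)

theorem Real.mul_mul_log_div_lt {x y : ℝ} (hy : 0 < y) (hxy : y < x) :
    x * y * log (x / y) < (x ^ 2 - y ^ 2) / 2 := by
  have hx : 0 < x := hy.trans hxy
  calc x * y * log (x / y) < x * y * ((x / y - (x / y)⁻¹) / 2) := by
        gcongr
        exact log_lt_sub_inv_div_two ((one_lt_div hy).mpr hxy)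
    _ = (x ^ 2 - y ^ 2) / 2 := by field_simp

theorem Real.mul_log_add_half_sub_mul_log_sub_half_lt {m : ℝ} (hm : 1 / 2 < m) :
    (m + 1 / 2) * log (m + 1 / 2) - (m - 1 / 2) * log (m - 1 / 2) < 1 + log m := by
  set a := m + 1 / 2 with ha
  set b := m - 1 / 2 with hb
  have hb0 : 0 < b := by linarith
  have hm0 : 0 < m := by linarith
  have upper := mul_mul_log_div_lt hm0 (show m < a by linarith)
  have lower := mul_mul_log_div_lt hb0 (show b < m by linarith)
  rw [log_div (by positivity) hm0.ne'] at upper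
  rw [log_div hm0.ne' hb0.ne'] at lower
  have scaled : m * (a * log a - b * log b - log m) < m * 1 := by
    calc m * (a * log a - b * log b - log m)
        = a * m * (log a - log m) + m * b * (log m - log b) := by rw [ha, hb]; ring
      _ < (a ^ 2 - m ^ 2) / 2 + (m ^ 2 - b ^ 2) / 2 := add_lt_add upper lower
      _ = m * 1 := by rw [ha, hb]; ring
  linarith [lt_of_mul_lt_mul_left scaled hm0.le]

/-- For every `ν > 1`,
`log(eπν) − ((ν+1)/2)log((ν+1)/2) + ((ν−1)/2)log((ν−1)/2) > log(2π)`. -/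
theorem stmt_9 (ν : ℝ) (hν : 1 < ν) :
    Real.log (Real.exp 1 * Real.pi * ν)
        - ((ν + 1) / 2) * Real.log ((ν + 1) / 2)
        + ((ν - 1) / 2) * Real.log ((ν - 1) / 2) > Real.log (2 * Real.pi) := by
  have key := mul_log_add_half_sub_mul_log_sub_half_lt (show 1 / 2 < ν / 2 by linarith)
  have hsplit : log (exp 1 * π * ν) = log (2 * π) + (1 + log (ν / 2)) := by
    rw [log_mul (by positivity) (by positivity), log_mul (by positivity) pi_ne_zero, log_exp,
      log_mul two_ne_zero pi_ne_zero, log_div (by positivity) two_ne_zero]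
    ring
  rw [show ν / 2 + 1 / 2 = (ν + 1) / 2 by ring, show ν / 2 - 1 / 2 = (ν - 1) / 2 by ring] at key
  rw [hsplit]
  linarith
end
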